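/- arXiv:2212.03142 — 2 statements merged into one kernel-verified Lean document; each statement's English description precedes it below -/
import Mathlib

section
/- Let a, b, k be integers with a ≠ 0, b ≠ 0 and k ≥ 2, and suppose a + b√k ≠ 1 and a + b√k ≠ −1 (√k denoting the nonnegative real square root of k). Then the set of irreducible λ-quiddities over ⟨a + b√k⟩ is exactly {(0, l(a+b√k), 0, −l(a+b√k)) : l ∈ ℤ} ∪ {(l(a+b√k), 0, −l(a+b√k), 0) : l ∈ ℤ}. -/
open Matrix Polynomial

noncomputable section

/-- The elementary matrix [[a, -1], [1, 0]]. -/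
def matE (a : ℂ) : Matrix (Fin 2) (Fin 2) ℂ := !![a, -1; 1, 0]

/-- M_n(a_1, …, a_n) = matE a_n * matE a_{n-1} * ⋯ * matE a_1, for the list [a_1, …, a_n]. -/
def Mlist (l : List ℂ) : Matrix (Fin 2) (Fin 2) ℂ := (l.reverse.map matE).prod

/-- A λ-quiddity over R : a nonempty tuple of elements of R with M_n(a_1,…,a_n) = ±Id. -/
def IsQuiddity (R : Set ℂ) (l : List ℂ) : Prop :=
  l ≠ [] ∧ (∀ x ∈ l, x ∈ R) ∧ (Mlist l = 1 ∨ Mlist l = -1)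

/-- (a_1,…,a_n) ⊕ (b_1,…,b_m) := (a_1+b_m, a_2,…,a_{n-1}, a_n+b_1, b_2,…,b_{m-1}). -/
def oplus (a b : List ℂ) : List ℂ :=
  (a.headI + b.getLastD 0) ::
    (a.tail.dropLast ++ (a.getLastD 0 + b.headI) :: b.tail.dropLast)

/-- b is obtained from a by a cyclic permutation of a or of the reversal of a. -/
def CyclicEquiv (a b : List ℂ) : Prop :=
  (∃ k, b = a.rotate k) ∨ (∃ k, b = a.reverse.rotate k)

/-- A λ-quiddity c over R is reducible if c ∼ (a_1,…,a_m) ⊕ (b_1,…,b_l) with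
(a_1,…,a_m) a tuple of elements of R, (b_1,…,b_l) a λ-quiddity over R, m ≥ 3 and l ≥ 3. -/
def ReducibleQuiddity (R : Set ℂ) (c : List ℂ) : Prop :=
  ∃ a b : List ℂ, (∀ x ∈ a, x ∈ R) ∧ IsQuiddity R b ∧
    3 ≤ a.length ∧ 3 ≤ b.length ∧ CyclicEquiv c (oplus a b)

/-- The irreducible λ-quiddities over R : the λ-quiddities of size ≥ 3 which are not
reducible (those of size < 3, i.e. (0,0), are by convention not irreducible). -/
def IrreducibleQuiddity (R : Set ℂ) (c : List ℂ) : Prop :=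
  IsQuiddity R c ∧ 3 ≤ c.length ∧ ¬ ReducibleQuiddity R c

/-- The subgroup ⟨w⟩ = {kw : k ∈ ℤ} of (ℂ, +), as a set. -/
def subgroupGen (w : ℂ) : Set ℂ := {x | ∃ k : ℤ, x = (k : ℂ) * w}

end

/-!
Let `G` be an additive subgroup of `ℂ` in which every λ-quiddity has a zero entry. Then the
irreducible λ-quiddities over `G` are exactly `(0, t, 0, -t)` and `(t, 0, -t, 0)` with `t ∈ G`:
a zero entry of a λ-quiddity of size `≥ 5` splits off `(0, t, 0, -t)` as a `⊕`-summand, a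
λ-quiddity of size 3 has no zero entry, and a size-4 λ-quiddity with a zero entry has one of
the two shapes.

For `G = ⟨a + b√k⟩` every λ-quiddity has a zero entry. If all entries have modulus `≥ 2`, the
moduli of the top row of `M_n` grow strictly, so `M_n ≠ ±Id`. When `a + b√k` is an integer
`≠ ±1`, this applies to all nonzero multiples. Otherwise `√k` is irrational and `ℤ[√k]` embeds
into `ℂ`, so the conjugation `√k ↦ -√k` turns a λ-quiddity over `⟨a + b√k⟩` into one over
`⟨a - b√k⟩`; and one of `a ± b√k` has modulus `|a| + |b|√k ≥ 2`.
-/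

section QuiddityMatrix

variable {R : Type*} [CommRing R]

def quiddityMatrix (l : List R) : Matrix (Fin 2) (Fin 2) R :=
  (l.reverse.map fun a => !![a, -1; 1, 0]).prod

lemma Mlist_eq_quiddityMatrix (l : List ℂ) : Mlist l = quiddityMatrix l := rfl

lemma quiddityMatrix_map {S : Type*} [CommRing S] (φ : R →+* S) (l : List R) :
    quiddityMatrix (l.map φ) = φ.mapMatrix (quiddityMatrix l) := by
  have hE (a : R) : (!![a, -1; 1, 0] : Matrix (Fin 2) (Fin 2) R).map φ = !![φ a, -1; 1, 0] := by
    ext i j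
    fin_cases i <;> fin_cases j <;> simp
  simp [quiddityMatrix, map_list_prod, List.map_reverse, Function.comp_def, hE]

lemma quiddityMatrix_map_eq_one_or_neg_one {S T : Type*} [CommRing S] [CommRing T]
    (φ : R →+* S) (ψ : R →+* T) (hφ : Function.Injective φ) (l : List R)
    (h : quiddityMatrix (l.map φ) = 1 ∨ quiddityMatrix (l.map φ) = -1) :
    quiddityMatrix (l.map ψ) = 1 ∨ quiddityMatrix (l.map ψ) = -1 := by
  have hinj : Function.Injective (φ.mapMatrix (m := Fin 2)) := Matrix.map_injective hφ
  rw [quiddityMatrix_map] at h ⊢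
  rw [← map_one (φ.mapMatrix (m := Fin 2)), ← map_neg, hinj.eq_iff, hinj.eq_iff] at h
  rcases h with h | h
  · exact Or.inl (by rw [h, map_one])
  · exact Or.inr (by rw [h, map_neg, map_one])

end QuiddityMatrix

lemma Mlist_cons (x : ℂ) (l : List ℂ) : Mlist (x :: l) = Mlist l * matE x := by
  simp [Mlist]

lemma Mlist_append_singleton (x : ℂ) (l : List ℂ) : Mlist (l ++ [x]) = matE x * Mlist l := by
  simp [Mlist]

lemma Mlist_three (x y z : ℂ) :
    Mlist [x, y, z] = !![z * (y * x - 1) - x, 1 - z * y; y * x - 1, -y] := by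
  ext i j
  fin_cases i <;> fin_cases j <;> simp [Mlist, matE, Matrix.mul_apply, Fin.sum_univ_two] <;> ring

lemma Mlist_four (x y z t : ℂ) :
    Mlist [x, y, z, t] = !![t * (z * (y * x - 1) - x) - (y * x - 1), t * (1 - z * y) + y;
      z * (y * x - 1) - x, 1 - z * y] := by
  rw [show [x, y, z, t] = [x, y, z] ++ [t] from rfl, Mlist_append_singleton, Mlist_three, matE,
    Matrix.mul_fin_two]
  ext i j
  fin_cases i <;> fin_cases j <;> simp
  ring

lemma Mlist_offDiag_eq_zero {l : List ℂ} (hM : Mlist l = 1 ∨ Mlist l = -1) :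
    Mlist l 0 1 = 0 ∧ Mlist l 1 0 = 0 := by
  rcases hM with hM | hM <;> simp [hM]

lemma norm_Mlist_zero_one_add_one_le (l : List ℂ) (h : ∀ x ∈ l, 2 ≤ ‖x‖) :
    ‖Mlist l 0 1‖ + 1 ≤ ‖Mlist l 0 0‖ := by
  induction l with
  | nil => simp [Mlist]
  | cons x l ih =>
    have ih := ih fun y hy => h y (List.mem_cons_of_mem x hy)
    have hx : 2 ≤ ‖x‖ := h x List.mem_cons_self
    have h00 : Mlist (x :: l) 0 0 = Mlist l 0 0 * x + Mlist l 0 1 := by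
      simp [Mlist_cons, matE, Matrix.mul_apply, Fin.sum_univ_two]
    have h01 : Mlist (x :: l) 0 1 = -Mlist l 0 0 := by
      simp [Mlist_cons, matE, Matrix.mul_apply, Fin.sum_univ_two]
    have := norm_sub_norm_le (Mlist l 0 0 * x) (-Mlist l 0 1)
    rw [sub_neg_eq_add, norm_neg, norm_mul] at this
    rw [h00, h01, norm_neg]
    nlinarith [norm_nonneg (Mlist l 0 0)]

lemma zero_mem_of_two_le_norm {c : List ℂ} (hc : c ≠ []) (hM : Mlist c = 1 ∨ Mlist c = -1)
    (h : ∀ x ∈ c, x ≠ 0 → 2 ≤ ‖x‖) : (0 : ℂ) ∈ c := by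
  by_contra h0
  obtain ⟨x, l, rfl⟩ := List.exists_cons_of_ne_nil hc
  have hl := norm_Mlist_zero_one_add_one_le l fun y hy =>
    h y (List.mem_cons_of_mem x hy) (ne_of_mem_of_not_mem (List.mem_cons_of_mem x hy) h0)
  have h01 : Mlist (x :: l) 0 1 = -Mlist l 0 0 := by
    simp [Mlist_cons, matE, Matrix.mul_apply, Fin.sum_univ_two]
  have hzero := (Mlist_offDiag_eq_zero hM).1
  rw [h01, neg_eq_zero] at hzero
  rw [hzero, norm_zero] at hl
  linarith [norm_nonneg (Mlist l 0 1)]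

lemma zero_notMem_of_Mlist_three {x y z : ℂ}
    (hM : Mlist [x, y, z] = 1 ∨ Mlist [x, y, z] = -1) : (0 : ℂ) ∉ [x, y, z] := by
  have hzy : 1 - z * y = 0 := by simpa [Mlist_three] using (Mlist_offDiag_eq_zero hM).1
  have hyx : y * x - 1 = 0 := by simpa [Mlist_three] using (Mlist_offDiag_eq_zero hM).2
  simp only [List.mem_cons, List.not_mem_nil, or_false]
  rintro (rfl | rfl | rfl) <;> simp at hzy hyx

lemma Mlist_four_eq_one {x y z t : ℂ} (hM : Mlist [x, y, z, t] = 1) :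
    (x = 0 ∧ z = 0 ∧ t = -y) ∨ (y = 0 ∧ z = -x ∧ t = 0) := by
  rw [Mlist_four, Matrix.one_fin_two] at hM
  have h01 : t * (1 - z * y) + y = 0 := by simpa using congrFun₂ hM 0 1
  have h10 : z * (y * x - 1) - x = 0 := by simpa using congrFun₂ hM 1 0
  have h11 : z * y = 0 := by simpa using congrFun₂ hM 1 1
  rcases mul_eq_zero.mp h11 with rfl | rfl
  · exact Or.inl ⟨by linear_combination -h10, rfl, by linear_combination h01⟩
  · exact Or.inr ⟨rfl, by linear_combination -h10, by linear_combination h01⟩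

lemma zero_notMem_of_Mlist_four_eq_neg_one {x y z t : ℂ} (hM : Mlist [x, y, z, t] = -1) :
    (0 : ℂ) ∉ [x, y, z, t] := by
  rw [Mlist_four, Matrix.one_fin_two] at hM
  have h00 : t * (z * (y * x - 1) - x) - (y * x - 1) = -1 := by simpa using congrFun₂ hM 0 0
  have h01 : t * (1 - z * y) + y = 0 := by simpa using congrFun₂ hM 0 1
  have h10 : z * (y * x - 1) - x = 0 := by simpa using congrFun₂ hM 1 0
  have h11 : 1 - z * y = -1 := by simpa using congrFun₂ hM 1 1
  have hyx : y * x = 2 := by linear_combination -h00 + t * h10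
  have hzy : z * y = 2 := by linear_combination -h11
  obtain rfl : t = y := by linear_combination -h01 + t * h11
  simp only [List.mem_cons, List.not_mem_nil, or_false]
  rintro (rfl | rfl | rfl | rfl) <;> simp at hyx hzy

lemma Mlist_zero_self_zero_neg (t : ℂ) : Mlist [0, t, 0, -t] = 1 := by
  simp [Mlist_four, Matrix.one_fin_two]

lemma Mlist_self_zero_neg_zero (t : ℂ) : Mlist [t, 0, -t, 0] = 1 := by
  simp [Mlist_four, Matrix.one_fin_two]

lemma length_oplus (a b : List ℂ) :
    (oplus a b).length = a.length - 2 + (b.length - 2) + 2 := by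
  simp [oplus]
  omega

lemma oplus_zero_self_zero_neg (x t : ℂ) {y : List ℂ} (hy : y ≠ []) :
    oplus ((x + t) :: y) [0, t, 0, -t] = x :: y ++ [t, 0] := by
  obtain ⟨y, z, rfl⟩ := (List.eq_nil_or_concat' y).resolve_left hy
  simp [oplus, List.getLast?_cons]

lemma CyclicEquiv.length_eq {c d : List ℂ} (h : CyclicEquiv c d) : d.length = c.length := by
  rcases h with ⟨k, rfl⟩ | ⟨k, rfl⟩ <;> simp

section AddSubgroup

variable {G : AddSubgroup ℂ}

lemma isQuiddity_zero_self_zero_neg {t : ℂ} (ht : t ∈ G) : IsQuiddity G [0, t, 0, -t] := by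
  refine ⟨by simp, ?_, Or.inl (Mlist_zero_self_zero_neg t)⟩
  simp [ht, G.zero_mem]

lemma isQuiddity_self_zero_neg_zero {t : ℂ} (ht : t ∈ G) : IsQuiddity G [t, 0, -t, 0] := by
  refine ⟨by simp, ?_, Or.inl (Mlist_self_zero_neg_zero t)⟩
  simp [ht, G.zero_mem]

lemma reducibleQuiddity_of_zero_mem {c : List ℂ} (hc : IsQuiddity G c) (hlen : 5 ≤ c.length)
    (h0 : (0 : ℂ) ∈ c) : ReducibleQuiddity G c := by
  obtain ⟨l₁, l₂, rfl⟩ := List.append_of_mem h0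
  have hrot : (l₁ ++ 0 :: l₂).rotate (l₁ ++ [0]).length = l₂ ++ l₁ ++ [0] := by
    rw [show l₁ ++ 0 :: l₂ = l₁ ++ [0] ++ l₂ by simp, List.rotate_append_length_eq,
      List.append_assoc]
  have hlen' : 4 ≤ (l₂ ++ l₁).length := by
    simp only [List.length_append, List.length_cons] at hlen ⊢
    omega
  obtain ⟨d, t, hd⟩ := (List.eq_nil_or_concat' (l₂ ++ l₁)).resolve_left fun h => by
    simp [h] at hlen'
  obtain ⟨x, y, rfl⟩ := List.exists_cons_of_ne_nil (show d ≠ [] by rintro rfl; simp [hd] at hlen')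
  have hy : 2 ≤ y.length := by
    simp only [hd, List.cons_append, List.length_cons, List.length_append, List.length_nil]
      at hlen'
    omega
  have hmem : ∀ u ∈ x :: y ++ [t], u ∈ G := fun u hu =>
    hc.2.1 u (by rw [← hd] at hu; simp at hu ⊢; tauto)
  refine ⟨(x + t) :: y, [0, t, 0, -t], ?_, isQuiddity_zero_self_zero_neg (hmem t (by simp)),
    by simp; omega, by simp, Or.inl ⟨(l₁ ++ [0]).length, ?_⟩⟩
  · simp only [List.mem_cons]
    rintro u (rfl | hu)
    · exact G.add_mem (hmem x (by simp)) (hmem t (by simp))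
    · exact hmem u (by simp [hu])
  · rw [hrot, hd, oplus_zero_self_zero_neg x t (by rintro rfl; simp at hy)]
    simp

lemma length_ne_three_of_isQuiddity (hG : ∀ c, IsQuiddity G c → (0 : ℂ) ∈ c) {c : List ℂ}
    (hc : IsQuiddity G c) : c.length ≠ 3 := by
  intro h3
  obtain ⟨x, y, z, rfl⟩ := List.length_eq_three.mp h3
  exact zero_notMem_of_Mlist_three hc.2.2 (hG _ hc)

lemma irreducibleQuiddity_of_length_eq_four (hG : ∀ c, IsQuiddity G c → (0 : ℂ) ∈ c)
    {c : List ℂ} (hc : IsQuiddity G c) (h4 : c.length = 4) : IrreducibleQuiddity G c := by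
  refine ⟨hc, by omega, ?_⟩
  rintro ⟨a, b, -, hb, ha3, hb3, hcb⟩
  have := hcb.length_eq
  rw [length_oplus] at this
  exact length_ne_three_of_isQuiddity hG hb (by omega)

lemma exists_eq_of_isQuiddity_of_length_eq_four (hG : ∀ c, IsQuiddity G c → (0 : ℂ) ∈ c)
    {c : List ℂ} (hc : IsQuiddity G c) (h4 : c.length = 4) :
    ∃ t ∈ G, c = [0, t, 0, -t] ∨ c = [t, 0, -t, 0] := by
  obtain ⟨x, y, z, t, rfl⟩ : ∃ x y z t, c = [x, y, z, t] := by
    match c, h4 with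
    | [x, y, z, t], _ => exact ⟨x, y, z, t, rfl⟩
  obtain ⟨-, hmem, hM | hM⟩ := hc
  · rcases Mlist_four_eq_one hM with ⟨rfl, rfl, rfl⟩ | ⟨rfl, rfl, rfl⟩
    · exact ⟨y, hmem y (by simp), Or.inl rfl⟩
    · exact ⟨x, hmem x (by simp), Or.inr rfl⟩
  · exact absurd (hG _ ⟨by simp, hmem, Or.inr hM⟩) (zero_notMem_of_Mlist_four_eq_neg_one hM)

theorem setOf_irreducibleQuiddity_eq (hG : ∀ c, IsQuiddity G c → (0 : ℂ) ∈ c) :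
    {c | IrreducibleQuiddity G c} =
      {c | ∃ t ∈ G, c = [0, t, 0, -t]} ∪ {c | ∃ t ∈ G, c = [t, 0, -t, 0]} := by
  ext c
  simp only [Set.mem_ofPred_eq, Set.mem_union]
  constructor
  · rintro ⟨hc, hlen, hirr⟩
    have h4 : c.length = 4 := by
      have := length_ne_three_of_isQuiddity hG hc
      by_contra h4
      exact hirr (reducibleQuiddity_of_zero_mem hc (by omega) (hG c hc))
    obtain ⟨t, ht, h | h⟩ := exists_eq_of_isQuiddity_of_length_eq_four hG hc h4
    exacts [Or.inl ⟨t, ht, h⟩, Or.inr ⟨t, ht, h⟩]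
  · rintro (⟨t, ht, rfl⟩ | ⟨t, ht, rfl⟩)
    · exact irreducibleQuiddity_of_length_eq_four hG (isQuiddity_zero_self_zero_neg ht) rfl
    · exact irreducibleQuiddity_of_length_eq_four hG (isQuiddity_self_zero_neg_zero ht) rfl

end AddSubgroup

lemma coe_zmultiples_eq_subgroupGen (w : ℂ) :
    (AddSubgroup.zmultiples w : Set ℂ) = subgroupGen w := by
  ext x
  simp [subgroupGen, AddSubgroup.mem_zmultiples_iff, eq_comm]

lemma exists_eq_map_of_forall_mem_subgroupGen {w : ℂ} {c : List ℂ}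
    (h : ∀ x ∈ c, x ∈ subgroupGen w) : ∃ L : List ℤ, c = L.map fun n : ℤ => (n : ℂ) * w := by
  have hc : c ∈ Set.range (List.map fun n : ℤ => (n : ℂ) * w) := by
    rw [Set.range_list_map]
    exact fun x hx => (h x hx).imp fun n hn => hn.symm
  obtain ⟨L, hL⟩ := hc
  exact ⟨L, hL.symm⟩

lemma zero_mem_of_Mlist_map_intCast_mul {v : ℂ} (hv : 2 ≤ ‖v‖) {L : List ℤ} (hL : L ≠ [])
    (hM : Mlist (L.map fun n : ℤ => (n : ℂ) * v) = 1 ∨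
      Mlist (L.map fun n : ℤ => (n : ℂ) * v) = -1) :
    (0 : ℤ) ∈ L := by
  have hv0 : v ≠ 0 := by rintro rfl; norm_num at hv
  have hmem : ∀ x ∈ L.map fun n : ℤ => (n : ℂ) * v, x ≠ 0 → 2 ≤ ‖x‖ := by
    simp only [List.mem_map]
    rintro _ ⟨n, -, rfl⟩ hn
    have : (1 : ℝ) ≤ |(n : ℝ)| := by exact_mod_cast Int.one_le_abs (by rintro rfl; simp at hn)
    rw [norm_mul, Complex.norm_intCast]
    nlinarith [norm_nonneg v]
  obtain ⟨n, hn, h0⟩ := List.mem_map.mp (zero_mem_of_two_le_norm (by simpa using hL) hM hmem)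
  simp only [mul_eq_zero, hv0, or_false, Int.cast_eq_zero] at h0
  exact h0 ▸ hn

lemma zero_mem_of_isQuiddity_intCast {W : ℤ} (h1 : W ≠ 1) (h2 : W ≠ -1) {c : List ℂ}
    (hc : IsQuiddity (subgroupGen W) c) : (0 : ℂ) ∈ c := by
  obtain ⟨hne, hmem, hM⟩ := hc
  obtain ⟨L, rfl⟩ := exists_eq_map_of_forall_mem_subgroupGen hmem
  rcases eq_or_ne W 0 with rfl | hW0
  · obtain ⟨n, hn⟩ := List.exists_mem_of_ne_nil L (by simpa using hne)
    exact List.mem_map.mpr ⟨n, hn, by simp⟩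
  · have hW : 2 ≤ ‖(W : ℂ)‖ := by
      rw [Complex.norm_intCast]
      exact_mod_cast (by rw [Int.abs_eq_natAbs]; omega : 2 ≤ |W|)
    exact List.mem_map.mpr
      ⟨0, zero_mem_of_Mlist_map_intCast_mul hW (by simpa using hne) hM, by simp⟩

lemma Mlist_map_intCast_mul_conj {d : ℤ} (hd : ∀ n : ℤ, d ≠ n * n) {r r' : ℂ}
    (hr : r * r = d) (hr' : r' * r' = d) (a b : ℤ) (L : List ℤ)
    (hM : Mlist (L.map fun n : ℤ => (n : ℂ) * (a + b * r)) = 1 ∨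
      Mlist (L.map fun n : ℤ => (n : ℂ) * (a + b * r)) = -1) :
    Mlist (L.map fun n : ℤ => (n : ℂ) * (a + b * r')) = 1 ∨
      Mlist (L.map fun n : ℤ => (n : ℂ) * (a + b * r')) = -1 := by
  have hmap (ρ : ℂ) (hρ : ρ * ρ = d) : L.map (fun n : ℤ => (n : ℂ) * (a + b * ρ)) =
      (L.map fun n : ℤ => (n : ℤ√d) * ⟨a, b⟩).map (Zsqrtd.lift ⟨ρ, hρ⟩) := by
    simp only [List.map_map, Function.comp_def, Zsqrtd.lift_apply_apply, Zsqrtd.smul_val,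
      Int.cast_mul]
    congr 1
    funext n
    ring
  rw [hmap r hr, Mlist_eq_quiddityMatrix] at hM
  rw [hmap r' hr', Mlist_eq_quiddityMatrix]
  exact quiddityMatrix_map_eq_one_or_neg_one _ _ (Zsqrtd.lift_injective _ hd) _ hM

lemma le_abs_add_or_le_abs_sub {x y c : ℝ} (h : c ≤ |x| + |y|) : c ≤ |x + y| ∨ c ≤ |x - y| := by
  by_contra! hc
  obtain ⟨⟨h1, h2⟩, ⟨h3, h4⟩⟩ := And.imp abs_lt.mp abs_lt.mp hc
  cases abs_cases x <;> cases abs_cases y <;> linarith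

lemma exists_mul_self_eq_two_le_norm {a b k : ℤ} (ha : a ≠ 0) (hb : b ≠ 0) (hk : 1 ≤ k) :
    ∃ r : ℂ, r * r = k ∧ 2 ≤ ‖(a : ℂ) + b * r‖ := by
  set s := √(k : ℝ)
  have hs : 1 ≤ s := Real.one_le_sqrt.mpr (by exact_mod_cast hk)
  have hss : (s : ℂ) * s = k := by
    rw [← Complex.ofReal_mul, Real.mul_self_sqrt (by positivity), Complex.ofReal_intCast]
  have hbs : 1 ≤ |(b : ℝ) * s| := by
    rw [abs_mul, abs_of_nonneg (by positivity : 0 ≤ s)]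
    have : (1 : ℝ) ≤ |(b : ℝ)| := by exact_mod_cast Int.one_le_abs hb
    nlinarith
  have ha' : (1 : ℝ) ≤ |(a : ℝ)| := by exact_mod_cast Int.one_le_abs ha
  have hnorm (r : ℝ) : ‖(a : ℂ) + b * (r : ℂ)‖ = |(a : ℝ) + b * r| := by
    rw [← Real.norm_eq_abs, ← Complex.norm_real]
    push_cast
    rfl
  rcases le_abs_add_or_le_abs_sub (show 2 ≤ |(a : ℝ)| + |b * s| by linarith) with h | h
  · exact ⟨s, hss, by rw [hnorm]; exact h⟩
  · refine ⟨(-s : ℝ), by push_cast; rw [neg_mul_neg]; exact hss, ?_⟩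
    rw [hnorm]
    simpa [← sub_eq_add_neg] using h

lemma zero_mem_of_isQuiddity_of_irrational {a b k : ℤ} (ha : a ≠ 0) (hb : b ≠ 0)
    (hk : Irrational √(k : ℝ)) {c : List ℂ}
    (hc : IsQuiddity (subgroupGen ((a : ℂ) + (b : ℂ) * (Real.sqrt (k : ℝ) : ℂ))) c) :
    (0 : ℂ) ∈ c := by
  obtain ⟨hnsq, hk0⟩ := irrational_sqrt_intCast_iff.mp hk
  have hd : ∀ n : ℤ, k ≠ n * n := fun n h => hnsq ⟨n, h⟩
  have hk1 : 1 ≤ k := by have := hd 0; omega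
  have hs : (√(k : ℝ) : ℂ) * √(k : ℝ) = k := by
    rw [← Complex.ofReal_mul, Real.mul_self_sqrt (by exact_mod_cast hk0), Complex.ofReal_intCast]
  obtain ⟨hne, hmem, hM⟩ := hc
  obtain ⟨L, rfl⟩ := exists_eq_map_of_forall_mem_subgroupGen hmem
  obtain ⟨r, hr, hnorm⟩ := exists_mul_self_eq_two_le_norm ha hb hk1
  have h0 := zero_mem_of_Mlist_map_intCast_mul hnorm (by simpa using hne)
    (Mlist_map_intCast_mul_conj hd hs hr a b L hM)
  exact List.mem_map.mpr ⟨0, h0, by simp⟩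

lemma exists_intCast_eq_or_irrational (a b k : ℤ) :
    (∃ W : ℤ, (a : ℂ) + (b : ℂ) * (Real.sqrt (k : ℝ) : ℂ) = W) ∨
      (b ≠ 0 ∧ Irrational √(k : ℝ)) := by
  by_cases hb : b = 0
  · exact Or.inl ⟨a, by simp [hb]⟩
  by_cases hk : Irrational √(k : ℝ)
  · exact Or.inr ⟨hb, hk⟩
  obtain ⟨m, hm⟩ : ∃ m : ℤ, √(k : ℝ) = m := by
    rw [irrational_sqrt_intCast_iff, not_and_or, not_not, not_le] at hk
    rcases hk with ⟨m, rfl⟩ | hk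
    · exact ⟨|m|, by push_cast; exact Real.sqrt_mul_self_eq_abs _⟩
    · exact ⟨0, by simpa using Real.sqrt_eq_zero_of_nonpos (by exact_mod_cast hk.le)⟩
  exact Or.inl ⟨a + b * m, by rw [hm]; push_cast; ring⟩

theorem stmt1_general (a b k : ℤ) (ha : a ≠ 0)
    (w : ℂ) (hw : w = (a : ℂ) + (b : ℂ) * (Real.sqrt (k : ℝ) : ℂ))
    (h1 : w ≠ 1) (h2 : w ≠ -1) :
    {c : List ℂ | IrreducibleQuiddity (subgroupGen w) c} =
      {c : List ℂ | ∃ l : ℤ, c = [0, (l : ℂ) * w, 0, -((l : ℂ) * w)]} ∪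
      {c : List ℂ | ∃ l : ℤ, c = [(l : ℂ) * w, 0, -((l : ℂ) * w), 0]} := by
  have hzero : ∀ c, IsQuiddity (AddSubgroup.zmultiples w) c → (0 : ℂ) ∈ c := by
    rw [coe_zmultiples_eq_subgroupGen]
    intro c hc
    rcases exists_intCast_eq_or_irrational a b k with ⟨W, hW⟩ | ⟨hb, hk⟩
    · rw [hW] at hw
      subst hw
      exact zero_mem_of_isQuiddity_intCast (by rintro rfl; simp at h1)
        (by rintro rfl; simp at h2) hc
    · subst hw
      exact zero_mem_of_isQuiddity_of_irrational ha hb hk hc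
  rw [← coe_zmultiples_eq_subgroupGen, setOf_irreducibleQuiddity_eq hzero]
  simp [AddSubgroup.mem_zmultiples_iff]

theorem stmt1 (a b k : ℤ) (ha : a ≠ 0) (hb : b ≠ 0) (hk : 2 ≤ k)
    (w : ℂ) (hw : w = (a : ℂ) + (b : ℂ) * (Real.sqrt (k : ℝ) : ℂ))
    (h1 : w ≠ 1) (h2 : w ≠ -1) :
    {c : List ℂ | IrreducibleQuiddity (subgroupGen w) c} =
      {c : List ℂ | ∃ l : ℤ, c = [0, (l : ℂ) * w, 0, -((l : ℂ) * w)]} ∪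
      {c : List ℂ | ∃ l : ℤ, c = [(l : ℂ) * w, 0, -((l : ℂ) * w), 0]} :=
  stmt1_general a b k ha w hw h1 h2
end

section
/- Let G be a subgroup of (ℂ,+). If every λ-quiddity over G of even size has at least one component equal to 0, then every λ-quiddity over G has even size, and the set of irreducible λ-quiddities over G is exactly {(0, g, 0, −g) : g ∈ G} ∪ {(g, 0, −g, 0) : g ∈ G}. -/
open Matrix Polynomial

/- ### Auxiliary lemmas -/

lemma Mlist_append' (l1 l2 : List ℂ) : Mlist (l1 ++ l2) = Mlist l2 * Mlist l1 := by
  simp [Mlist, List.reverse_append]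

lemma Mlist4' (a b c d : ℂ) :
    Mlist [a,b,c,d] = !![(a*b-1)*(c*d-1) - a*d, d - b*(c*d-1); c*(a*b-1) - a, 1 - b*c] := by
  show (matE d * (matE c * (matE b * (matE a * 1)))) = _
  ext i j
  fin_cases i <;> fin_cases j <;>
    simp [matE, Matrix.mul_apply, Fin.sum_univ_two] <;> ring

lemma Mlist_surgery' (a b : ℂ) (v : List ℂ) :
    Mlist (a :: 0 :: b :: v) = - Mlist ((a+b) :: v) := by
  have h1 : (a :: 0 :: b :: v) = [a,0,b] ++ v := rfl
  have h2 : ((a+b) :: v) = [a+b] ++ v := rfl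
  rw [h1, h2, Mlist_append', Mlist_append']
  have : Mlist [a,0,b] = - Mlist [a+b] := by
    show (matE b * (matE 0 * (matE a * 1))) = -(matE (a+b) * 1)
    ext i j
    fin_cases i <;> fin_cases j <;>
      simp [matE, Matrix.mul_apply, Fin.sum_univ_two] <;> ring
  rw [this, mul_neg]

lemma pm_comm' (A B : Matrix (Fin 2) (Fin 2) ℂ) (h : A * B = 1 ∨ A * B = -1) :
    B * A = 1 ∨ B * A = -1 := by
  rcases h with h | h
  · exact Or.inl (mul_eq_one_comm.mp h)
  · right
    have : A * (-B) = 1 := by rw [mul_neg, h, neg_neg]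
    have := mul_eq_one_comm.mp this
    rw [neg_mul] at this
    linear_combination (norm := abel) -this

lemma Mlist_rotate' (l : List ℂ) (k : ℕ) (h : Mlist l = 1 ∨ Mlist l = -1) :
    Mlist (l.rotate k) = 1 ∨ Mlist (l.rotate k) = -1 := by
  rcases eq_or_ne l [] with rfl | hl
  · simpa using h
  have hk : k % l.length ≤ l.length := le_of_lt (Nat.mod_lt _ (List.length_pos_iff.mpr hl))
  rw [← List.rotate_mod, List.rotate_eq_drop_append_take hk, Mlist_append']
  have := List.take_append_drop (k % l.length) l
  rw [← this, Mlist_append'] at h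
  exact pm_comm' _ _ h

lemma IsQuiddity.rotate' {R : Set ℂ} {l : List ℂ} (hq : IsQuiddity R l) (k : ℕ) :
    IsQuiddity R (l.rotate k) := by
  obtain ⟨h1, h2, h3⟩ := hq
  exact ⟨by simpa using h1, fun x hx => h2 x (by simpa using hx), Mlist_rotate' l k h3⟩

lemma not_len_one' {R : Set ℂ} {x : ℂ} (hq : IsQuiddity R [x]) : False := by
  obtain ⟨-, -, h | h⟩ := hq <;>
  · have := congrFun (congrFun h 1) 0
    simp [Mlist, matE, Matrix.one_apply] at this

lemma zero_mid' {c : List ℂ} (h0 : (0:ℂ) ∈ c) (h3 : 3 ≤ c.length) :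
    ∃ (k : ℕ) (a b : ℂ) (v : List ℂ), c.rotate k = a :: 0 :: b :: v := by
  obtain ⟨p, q, rfl⟩ := List.append_of_mem h0
  have hp : p.length ≤ (p ++ 0 :: q).length := by simp
  have h1 : (p ++ 0 :: q).rotate p.length = 0 :: (q ++ p) := by
    rw [List.rotate_eq_drop_append_take hp, List.drop_left, List.take_left]
    simp
  have hwl : 2 ≤ (q ++ p).length := by
    simp only [List.length_append, List.length_cons] at h3 ⊢; omega
  obtain ⟨b, v', hw⟩ : ∃ b v', q ++ p = b :: v' := by
    rcases hq : q ++ p with _ | ⟨b, v'⟩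
    · rw [hq] at hwl; simp at hwl
    · exact ⟨b, v', rfl⟩
  rw [hw] at h1 hwl
  have hv' : v' ≠ [] := by
    intro hv; rw [hv] at hwl; simp at hwl
  obtain ⟨v, a, hv⟩ : ∃ v a, v' = v ++ [a] :=
    ⟨v'.dropLast, v'.getLast hv', (List.dropLast_append_getLast hv').symm⟩
  rw [hv] at h1
  refine ⟨p.length + (0 :: b :: v).length, a, b, v, ?_⟩
  rw [← List.rotate_rotate, h1]
  have h2 : (0 :: b :: (v ++ [a])) = (0 :: b :: v) ++ [a] := by simp
  rw [h2, List.rotate_eq_drop_append_take (by simp), List.drop_left, List.take_left]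
  rfl

lemma double_quiddity' {R : Set ℂ} {c : List ℂ} (hq : IsQuiddity R c) :
    IsQuiddity R (c ++ c) := by
  obtain ⟨h1, h2, h3⟩ := hq
  refine ⟨by simp [h1], fun x hx => by rcases List.mem_append.mp hx with hx | hx <;> exact h2 x hx, ?_⟩
  left
  rw [Mlist_append']
  rcases h3 with h3 | h3 <;> rw [h3] <;> simp

lemma all_even' (G : AddSubgroup ℂ)
    (h : ∀ c : List ℂ, IsQuiddity (G : Set ℂ) c → Even c.length → (0 : ℂ) ∈ c) :
    ∀ c : List ℂ, IsQuiddity (G : Set ℂ) c → Even c.length := by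
  suffices H : ∀ n : ℕ, ∀ c : List ℂ, c.length = n → IsQuiddity (G : Set ℂ) c → Even n by
    intro c hc; exact H c.length c rfl hc
  intro n
  induction n using Nat.strong_induction_on with
  | _ n ih =>
    intro c hlen hq
    by_contra hodd
    have h0 : (0:ℂ) ∈ c := by
      have := h (c ++ c) (double_quiddity' hq) (by simp)
      simpa using this
    have hn1 : n ≠ 1 := by
      rintro rfl
      obtain ⟨x, rfl⟩ := List.length_eq_one_iff.mp hlen
      exact not_len_one' hq
    have hn3 : 3 ≤ n := by
      rcases Nat.even_or_odd n with he | ho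
      · exact absurd he hodd
      · rw [Nat.odd_iff] at ho; omega
    obtain ⟨k, a, b, v, hrot⟩ := zero_mid' h0 (hlen ▸ hn3)
    have hq2 := hq.rotate' k
    rw [hrot] at hq2
    obtain ⟨-, hmem, hM⟩ := hq2
    have hred : IsQuiddity (G : Set ℂ) ((a + b) :: v) := by
      refine ⟨by simp, ?_, ?_⟩
      · intro x hx
        rcases List.mem_cons.mp hx with rfl | hx
        · exact G.add_mem (hmem a (by simp)) (hmem b (by simp))
        · exact hmem x (by simp [hx])
      · rw [Mlist_surgery'] at hM
        rcases hM with hM | hM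
        · right; linear_combination (norm := abel) -hM
        · left; linear_combination (norm := abel) -hM
    have hlen2 : ((a + b) :: v).length = n - 2 := by
      have : (a :: 0 :: b :: v).length = n := by rw [← hrot]; simp [hlen]
      simp at this ⊢; omega
    have hE := ih (n - 2) (by omega) _ hlen2 hred
    rw [Nat.even_iff] at hE hodd
    omega

lemma Mlist_0g0g' (g : ℂ) : Mlist [0, g, 0, -g] = 1 := by
  rw [Mlist4', Matrix.one_fin_two]; congr 1 <;> ring

lemma Mlist_g0g0' (g : ℂ) : Mlist [g, 0, -g, 0] = 1 := by
  rw [Mlist4', Matrix.one_fin_two]; congr 1 <;> ring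

lemma classify4' {a b c d : ℂ} (hq : Mlist [a,b,c,d] = 1 ∨ Mlist [a,b,c,d] = -1)
    (h0 : a = 0 ∨ b = 0 ∨ c = 0 ∨ d = 0) :
    (a = 0 ∧ c = 0 ∧ d = -b) ∨ (b = 0 ∧ d = 0 ∧ c = -a) := by
  rw [Mlist4'] at hq
  rcases hq with hq | hq
  · have e01 : d - b*(c*d-1) = 0 := by
      have := congrFun (congrFun hq 0) 1; simpa [Matrix.one_apply] using this
    have e10 : c*(a*b-1) - a = 0 := by
      have := congrFun (congrFun hq 1) 0; simpa [Matrix.one_apply] using this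
    have e11 : 1 - b*c = 1 := by
      have := congrFun (congrFun hq 1) 1; simpa [Matrix.one_apply] using this
    have hbc : b * c = 0 := by linear_combination -e11
    rcases mul_eq_zero.mp hbc with hb | hc
    · right
      refine ⟨hb, ?_, ?_⟩
      · linear_combination e01 + (c*d-1)*hb
      · linear_combination -e10 + a*c*hb
    · left
      refine ⟨?_, hc, ?_⟩
      · linear_combination -e10 + (a*b-1)*hc
      · linear_combination e01 + b*d*hc
  · have e01 : d - b*(c*d-1) = 0 := by
      have := congrFun (congrFun hq 0) 1
      simpa [Matrix.one_apply] using this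
    have e10 : c*(a*b-1) - a = 0 := by
      have := congrFun (congrFun hq 1) 0
      simpa [Matrix.one_apply] using this
    have e11 : 1 - b*c = -1 := by
      have := congrFun (congrFun hq 1) 1
      simpa [Matrix.one_apply] using this
    have hbc : b * c = 2 := by linear_combination -e11
    exfalso
    rcases h0 with rfl | rfl | rfl | rfl
    · have hc : c = 0 := by linear_combination -e10
      rw [hc, mul_zero] at hbc; norm_num at hbc
    · rw [zero_mul] at hbc; norm_num at hbc
    · rw [mul_zero] at hbc; norm_num at hbc
    · have hb : b = 0 := by linear_combination e01
      rw [hb, zero_mul] at hbc; norm_num at hbc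

lemma oplus_length' (a b : List ℂ) (ha : 3 ≤ a.length) (hb : 3 ≤ b.length) :
    (oplus a b).length = a.length + b.length - 2 := by
  simp [oplus]
  omega

lemma oplus_eval' (u1 hh z : ℂ) (mid : List ℂ) :
    oplus ((u1 + hh) :: (mid ++ [z])) [0, hh, 0, -hh] = u1 :: (mid ++ [z, hh, 0]) := by
  have h : (u1+hh) :: (mid ++ [z]) = ((u1+hh)::mid) ++ [z] := rfl
  simp [oplus]
  rw [h, List.getLast?_concat]
  rfl

lemma reducible_of_big' (G : AddSubgroup ℂ) {c : List ℂ} (hq : IsQuiddity (G : Set ℂ) c)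
    (h0 : (0:ℂ) ∈ c) (h5 : 5 ≤ c.length) : ReducibleQuiddity (G : Set ℂ) c := by
  obtain ⟨p, q, rfl⟩ := List.append_of_mem h0
  have hp : p.length ≤ (p ++ 0 :: q).length := by simp
  have h1 : (p ++ 0 :: q).rotate p.length = 0 :: (q ++ p) := by
    rw [List.rotate_eq_drop_append_take hp, List.drop_left, List.take_left]; simp
  have h2 : (p ++ 0 :: q).rotate (p.length + 1) = (q ++ p) ++ [(0:ℂ)] := by
    rw [← List.rotate_rotate, h1, List.rotate_cons_succ, List.rotate_zero]
  have hwl : 4 ≤ (q ++ p).length := by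
    simp only [List.length_append, List.length_cons] at h5 ⊢; omega
  obtain ⟨u1, w1, hw⟩ : ∃ u1 w1, q ++ p = u1 :: w1 := by
    rcases hqq : q ++ p with _ | ⟨u1, w1⟩
    · rw [hqq] at hwl; simp at hwl
    · exact ⟨u1, w1, rfl⟩
  rw [hw] at hwl h2
  have hw1 : w1 ≠ [] := by intro hv; rw [hv] at hwl; simp at hwl
  obtain ⟨w2, hh, hw1e⟩ : ∃ w2 hh, w1 = w2 ++ [hh] :=
    ⟨w1.dropLast, w1.getLast hw1, (List.dropLast_append_getLast hw1).symm⟩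
  rw [hw1e] at hwl h2
  have hw2 : w2 ≠ [] := by intro hv; rw [hv] at hwl; simp at hwl
  obtain ⟨mid, z, hw2e⟩ : ∃ mid z, w2 = mid ++ [z] :=
    ⟨w2.dropLast, w2.getLast hw2, (List.dropLast_append_getLast hw2).symm⟩
  rw [hw2e] at hwl h2
  have hmemc : ∀ x ∈ u1 :: ((mid ++ [z]) ++ [hh]) ++ [(0:ℂ)], x ∈ G := by
    intro x hx
    apply hq.2.1
    have : x ∈ (p ++ 0 :: q).rotate (p.length + 1) := by rw [h2]; exact hx
    simpa using this
  refine ⟨(u1 + hh) :: (mid ++ [z]), [0, hh, 0, -hh], ?_, ?_, ?_, ?_, ?_⟩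
  · intro x hx
    rcases List.mem_cons.mp hx with rfl | hx
    · exact G.add_mem (hmemc u1 (by simp)) (hmemc hh (by simp))
    · exact hmemc x (by simp at hx ⊢; tauto)
  · refine ⟨by simp, ?_, Or.inl (Mlist_0g0g' hh)⟩
    intro x hx
    have hhG : hh ∈ G := hmemc hh (by simp)
    simp at hx
    rcases hx with rfl | rfl | rfl | rfl
    · exact G.zero_mem
    · exact hhG
    · exact G.zero_mem
    · exact G.neg_mem hhG
  · simp at hwl ⊢; omega
  · simp
  · left
    refine ⟨p.length + 1, ?_⟩
    rw [h2, oplus_eval']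
    simp

lemma len4_not_reducible' (G : AddSubgroup ℂ)
    (heven : ∀ c : List ℂ, IsQuiddity (G : Set ℂ) c → Even c.length)
    {c : List ℂ} (hlen : c.length = 4) : ¬ ReducibleQuiddity (G : Set ℂ) c := by
  rintro ⟨a, b, haG, hbq, ha3, hb3, hce⟩
  have hlb : Even b.length := heven b hbq
  have hlen2 : c.length = (oplus a b).length := by
    rcases hce with ⟨k, hk⟩ | ⟨k, hk⟩ <;> rw [hk] <;> simp
  rw [hlen, oplus_length' a b ha3 hb3] at hlen2
  rw [Nat.even_iff] at hlb
  omega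

theorem stmt3 (G : AddSubgroup ℂ)
    (h : ∀ c : List ℂ, IsQuiddity (G : Set ℂ) c → Even c.length → (0 : ℂ) ∈ c) :
    (∀ c : List ℂ, IsQuiddity (G : Set ℂ) c → Even c.length) ∧
    ({c : List ℂ | IrreducibleQuiddity (G : Set ℂ) c} =
      {c : List ℂ | ∃ g ∈ G, c = [0, g, 0, -g]} ∪
      {c : List ℂ | ∃ g ∈ G, c = [g, 0, -g, 0]}) := by
  have hev := all_even' G h
  refine ⟨hev, ?_⟩
  ext c
  simp only [Set.mem_setOf_eq, Set.mem_union]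
  constructor
  · rintro ⟨hq, h3, hnr⟩
    have he := hev c hq
    have h0 : (0:ℂ) ∈ c := h c hq he
    have hlen4 : c.length = 4 := by
      by_contra hne
      have h5 : 5 ≤ c.length := by rw [Nat.even_iff] at he; omega
      exact hnr (reducible_of_big' G hq h0 h5)
    obtain ⟨x, y, z, w, rfl⟩ : ∃ x y z w, c = [x, y, z, w] := by
      rcases c with _ | ⟨x, _ | ⟨y, _ | ⟨z, _ | ⟨w, _ | ⟨t, r⟩⟩⟩⟩⟩ <;>
        simp_all
    have h0' : x = 0 ∨ y = 0 ∨ z = 0 ∨ w = 0 := by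
      simp [eq_comm] at h0; tauto
    rcases classify4' hq.2.2 h0' with ⟨rfl, rfl, rfl⟩ | ⟨rfl, rfl, rfl⟩
    · exact Or.inl ⟨y, hq.2.1 y (by simp), rfl⟩
    · exact Or.inr ⟨x, hq.2.1 x (by simp), rfl⟩
  · rintro (⟨g, hg, rfl⟩ | ⟨g, hg, rfl⟩)
    · refine ⟨⟨by simp, ?_, Or.inl (Mlist_0g0g' g)⟩, by simp, ?_⟩
      · intro x hx
        simp at hx
        rcases hx with rfl | rfl | rfl | rfl
        · exact G.zero_mem
        · exact hg
        · exact G.zero_mem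
        · exact G.neg_mem hg
      · exact len4_not_reducible' G hev (by simp)
    · refine ⟨⟨by simp, ?_, Or.inl (Mlist_g0g0' g)⟩, by simp, ?_⟩
      · intro x hx
        simp at hx
        rcases hx with rfl | rfl | rfl | rfl
        · exact hg
        · exact G.zero_mem
        · exact G.neg_mem hg
        · exact G.zero_mem
      · exact len4_not_reducible' G hev (by simp)
end
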